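/- For the asymmetric limited-magnitude channel over [q]^n with n ≥ 1, the weight assignment w_i = 1/(n - i_0 + 1 + (i_1 - 1)/(2(n - i_0))) for compositions i = (i_0,...,i_{q-1}) of n with i_0 ≠ n, and w_i = 1 if i_0 = n, is a fractional transversal: for every composition i of n, w_i + Σ_{k=1}^{q-1} i_k · w_{i^{(k)}} ≥ 1, where i^{(k)} is obtained from i by decreasing i_k by 1 and increasing i_{k-1} by 1. -/

import Mathlib

/-- The weight assigned to the equivalence class of words of `[q]^n` with
composition `i` (where `i j` is the number of coordinates equal to `j`):
`w_i = 1` if `i_0 = n`, and otherwise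
`w_i = 1/(n - i_0 + 1 + (i_1 - 1)/(2(n - i_0)))`. -/
noncomputable def wA (n : ℕ) (i : ℕ → ℕ) : ℝ :=
  if i 0 = n then 1
  else 1 / ((n : ℝ) - (i 0 : ℝ) + 1 + ((i 1 : ℝ) - 1) / (2 * ((n : ℝ) - (i 0 : ℝ))))

/-- The composition obtained from `i` by a single asymmetric magnitude-1 error on
a symbol of value `k ≥ 1`: decrease `i_k` by 1 and increase `i_{k-1}` by 1. -/
def decClass (i : ℕ → ℕ) (k : ℕ) : ℕ → ℕ :=
  fun j => if j = k then i j - 1 else if j + 1 = k then i j + 1 else i j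

/-!
Put `s = n - i₀`, `a = i₁` and `c = i₂ + ⋯ + i_{q-1}`, so `a + c = s`; for `s ≥ 1` the weight is
`w_i = 2s / (2s² + 2s + a - 1)`. An error on a symbol `k ≥ 2` keeps `s` and raises `a` by at most
one, so `w_i` and each of the `c` terms for such errors are at least `2s / (2s² + 2s + a)`, while the
`a` errors on a symbol `1` lead to a class with parameters `s - 1` and `a - 1` (of weight `1` when
`s = 1`). For `a = 0` the resulting lower bound is exactly `1`; for `a ≥ 1` it is a rational
inequality in `s` and `a`.
-/

open Finset

/-- The weight of a class with `s` nonzero symbols, `a` of which equal `1`. -/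
noncomputable def weight (s a : ℕ) : ℝ :=
  if s = 0 then 1 else 1 / ((s : ℝ) + 1 + ((a : ℝ) - 1) / (2 * s))

lemma wA_eq_weight {n : ℕ} {i : ℕ → ℕ} (h : i 0 ≤ n) : wA n i = weight (n - i 0) (i 1) := by
  unfold wA weight
  rcases h.eq_or_lt with h0 | h0
  · simp [h0]
  · rw [if_neg h0.ne, if_neg (by omega), Nat.cast_sub h]

lemma weight_eq_div {s : ℕ} (hs : s ≠ 0) (a : ℕ) :
    weight s a = 2 * s / (2 * s ^ 2 + 2 * s + a - 1) := by
  have : (s : ℝ) ≠ 0 := by exact_mod_cast hs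
  rw [weight, if_neg hs]
  field_simp
  ring

lemma weight_succ_le_weight (s a : ℕ) : weight s (a + 1) ≤ weight s a := by
  rcases eq_or_ne s 0 with rfl | hs
  · simp [weight]
  have : (1 : ℝ) ≤ s := by exact_mod_cast Nat.one_le_iff_ne_zero.2 hs
  rw [weight_eq_div hs, weight_eq_div hs]
  push_cast
  gcongr <;> nlinarith

lemma one_le_mul_div_add_mul_div {s a : ℝ} (hs : 2 ≤ s) (ha : 0 ≤ a) (has : a ≤ s) :
    1 ≤ (1 + s - a) * (2 * s / (2 * s ^ 2 + 2 * s + a))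
      + a * (2 * (s - 1) / (2 * s ^ 2 - 2 * s + a - 2)) := by
  have hD : 0 < 2 * s ^ 2 + 2 * s + a := by positivity
  have hD' : 0 < 2 * s ^ 2 - 2 * s + a - 2 := by nlinarith
  rw [mul_div_assoc', mul_div_assoc', div_add_div _ _ hD.ne' hD'.ne', le_div_iff₀ (by positivity)]
  -- after clearing denominators the difference of the two sides is exactly `a (2s² + 2s + 2 - 3a)`
  linarith [mul_nonneg ha (by nlinarith : 0 ≤ 2 * s ^ 2 + 2 * s + 2 - 3 * a)]

lemma one_le_add_mul_weight {s a c : ℕ} (hs : 1 ≤ s) (h : a + c = s) :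
    1 ≤ (1 + c) * weight s (a + 1) + a * weight (s - 1) (a - 1) := by
  have hW : 0 ≤ weight s (a + 1) := by
    rw [weight_eq_div (by omega)]; push_cast; ring_nf; positivity
  obtain rfl | ha := Nat.eq_zero_or_pos a
  · have hc : (c : ℝ) = s := by exact_mod_cast (by omega : c = s)
    rw [weight_eq_div (by omega), hc]
    push_cast
    rw [zero_mul, add_zero, add_sub_cancel_right, mul_div_assoc',
      le_div_iff₀ (by positivity)]
    linarith
  obtain rfl | hs2 := eq_or_lt_of_le hs
  · obtain rfl : a = 1 := by omega
    have : weight (1 - 1) (1 - 1) = 1 := by simp [weight]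
    rw [this]
    push_cast
    nlinarith
  obtain ⟨a, rfl⟩ := Nat.exists_eq_add_of_le' ha
  rw [weight_eq_div (by omega), weight_eq_div (by omega), Nat.add_sub_cancel]
  have key := one_le_mul_div_add_mul_div (s := s) (a := a + 1)
    (by exact_mod_cast hs2) (by positivity) (by exact_mod_cast (by omega : a + 1 ≤ s))
  have hc : (c : ℝ) = s - (a + 1) := by rw [← h]; push_cast; ring
  rw [Nat.cast_sub hs] at *
  push_cast at *
  rw [hc]
  convert key using 3 <;> ring

lemma decClass_zero {i : ℕ → ℕ} {k : ℕ} (hk : 2 ≤ k) : decClass i k 0 = i 0 := by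
  unfold decClass
  split_ifs <;> omega

lemma weight_succ_le_wA_decClass {n k : ℕ} {i : ℕ → ℕ} (hk : 2 ≤ k) (h : i 0 ≤ n) :
    weight (n - i 0) (i 1 + 1) ≤ wA n (decClass i k) := by
  rw [wA_eq_weight (by rwa [decClass_zero hk]), decClass_zero hk]
  rcases hk.eq_or_lt with rfl | hk
  · simp [decClass]
  · have : decClass i k 1 = i 1 := by unfold decClass; split_ifs <;> omega
    rw [this]
    exact weight_succ_le_weight _ _

lemma sum_range_eq_add_add_sum_Ico {M : Type*} [AddCommMonoid M] (f : ℕ → M) {q : ℕ}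
    (hq : 2 ≤ q) : ∑ j ∈ range q, f j = f 0 + f 1 + ∑ j ∈ Ico 2 q, f j := by
  rw [range_eq_Ico, sum_eq_sum_Ico_succ_bot (by omega), sum_eq_sum_Ico_succ_bot (by omega)]
  simp [add_assoc]

theorem asym_limited_magnitude_fractional_transversal_general (n q : ℕ) :
    ∀ i : ℕ → ℕ, (∑ j ∈ Finset.range q, i j = n) → (∀ j, q ≤ j → i j = 0) →
      1 ≤ wA n i + ∑ k ∈ Finset.Ico 1 q, (i k : ℝ) * wA n (decClass i k) := by
  intro i hsum hzero
  rcases eq_or_ne (i 0) n with h0 | h0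
  · have hvanish : ∀ k ∈ Ico 1 q, i k = 0 := by
      rcases Nat.eq_zero_or_pos q with rfl | hq
      · simp
      rw [range_eq_Ico, sum_eq_sum_Ico_succ_bot hq, zero_add, h0] at hsum
      exact sum_eq_zero_iff.1 (by omega)
    rw [sum_eq_zero fun k hk => by simp [hvanish k hk], wA, if_pos h0, add_zero]
  have hq : 2 ≤ q := by
    by_contra! hq
    interval_cases q
    · exact h0 (by simp [hzero 0 le_rfl, ← hsum])
    · exact h0 (by simpa using hsum)
  rw [sum_range_eq_add_add_sum_Ico _ hq] at hsum
  set c := ∑ j ∈ Ico 2 q, i j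
  have hrest : (c : ℝ) * weight (n - i 0) (i 1 + 1)
      ≤ ∑ k ∈ Ico 2 q, (i k : ℝ) * wA n (decClass i k) := by
    rw [Nat.cast_sum, sum_mul]
    gcongr with k hk
    exact weight_succ_le_wA_decClass (mem_Ico.1 hk).1 (by omega)
  have hone : wA n (decClass i 1) = weight (n - i 0 - 1) (i 1 - 1) := by
    rw [wA_eq_weight (by simp [decClass]; omega)]
    simp [decClass, Nat.sub_sub]
  have := one_le_add_mul_weight (s := n - i 0) (a := i 1) (c := c) (by omega) (by omega)
  rw [sum_eq_sum_Ico_succ_bot (by omega : 1 < q), hone, wA_eq_weight (by omega)]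
  linarith [weight_succ_le_weight (n - i 0) (i 1)]

/-- **Improved fractional transversal for the asymmetric limited-magnitude
channel.** For every composition `i = (i_0, …, i_{q-1})` of `n`,
`w_i + ∑_{k=1}^{q-1} i_k · w_{i^{(k)}} ≥ 1`. -/
theorem asym_limited_magnitude_fractional_transversal (n q : ℕ)
    (hn : 1 ≤ n) (hq : 2 ≤ q) :
    ∀ i : ℕ → ℕ, (∑ j ∈ Finset.range q, i j = n) → (∀ j, q ≤ j → i j = 0) →
      1 ≤ wA n i + ∑ k ∈ Finset.Ico 1 q, (i k : ℝ) * wA n (decClass i k) :=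
  asym_limited_magnitude_fractional_transversal_general n q
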